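/- Let ζ be a Borel probability measure on ℝ^q with compact support, let μ > 0, let f : ℝ^q → ℝ be continuous with sup_{z ∈ supp ζ} f(z) − inf_{z ∈ supp ζ} f(z) ≤ μ/2, and let g : ℝ^q → ℝ^m be continuous with ‖g(z)‖ ≤ l for all z ∈ supp ζ. Then ∫ e^{2 f(z)/μ} ‖g(z)‖² dζ(z) ≤ 3 l² · ( ∫ e^{f(z)/μ} dζ(z) )². -/

import Mathlib

open MeasureTheory Filter Real Set

/-- The (topological) support of a measure: points all of whose neighborhoods have
positive measure. -/
def msupport {E : Type*} [TopologicalSpace E] [MeasurableSpace E] (ζ : Measure E) : Set E :=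
  {x | ∀ U ∈ nhds x, 0 < ζ U}

lemma msupport_compl_null {E : Type*} [TopologicalSpace E] [MeasurableSpace E]
    [SecondCountableTopology E] (ζ : Measure E) :
    ζ (msupport ζ)ᶜ = 0 := by
  have key : ∀ x : ((msupport ζ)ᶜ : Set E), ∃ V : Set E, IsOpen V ∧ (x : E) ∈ V ∧ ζ V = 0 := by
    rintro ⟨x, hx⟩
    simp only [msupport, mem_compl_iff, mem_setOf_eq, not_forall] at hx
    obtain ⟨U, hU, hU0⟩ := hx
    obtain ⟨V, hVU, hVopen, hxV⟩ := mem_nhds_iff.mp hU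
    refine ⟨V, hVopen, hxV, le_antisymm ?_ zero_le⟩
    calc ζ V ≤ ζ U := measure_mono hVU
    _ = 0 := le_antisymm (not_lt.mp hU0) zero_le
  choose V hVopen hxV hV0 using key
  obtain ⟨T, hTc, hTU⟩ := TopologicalSpace.isOpen_iUnion_countable V hVopen
  have hsub : (msupport ζ)ᶜ ⊆ ⋃ i ∈ T, V i := by
    rw [hTU]
    intro x hx
    exact mem_iUnion.mpr ⟨⟨x, hx⟩, hxV _⟩
  refine le_antisymm ?_ zero_le
  calc ζ (msupport ζ)ᶜ ≤ ζ (⋃ i ∈ T, V i) := measure_mono hsub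
  _ = 0 := (measure_biUnion_null_iff hTc).mpr fun i _ => hV0 i

lemma msupport_closed {E : Type*} [TopologicalSpace E] [MeasurableSpace E] (ζ : Measure E) :
    IsClosed (msupport ζ) := by
  rw [← isOpen_compl_iff, isOpen_iff_mem_nhds]
  intro x hx
  simp only [msupport, mem_compl_iff, mem_setOf_eq, not_forall] at hx
  obtain ⟨U, hU, hU0⟩ := hx
  obtain ⟨W, hWU, hWopen, hxW⟩ := mem_nhds_iff.mp hU
  filter_upwards [hWopen.mem_nhds hxW] with y hy
  simp only [msupport, mem_compl_iff, mem_setOf_eq, not_forall]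
  exact ⟨W, hWopen.mem_nhds hy, fun h => absurd (lt_of_lt_of_le h (measure_mono hWU)) hU0⟩

/-- vector version of the second-moment bound: if the oscillation of `f`
on `supp ζ` is at most `μ/2` and `‖g‖ ≤ l` on `supp ζ`, then
`∫ e^{2f/μ} ‖g‖² dζ ≤ 3 l² (∫ e^{f/μ} dζ)²`. -/
theorem second_moment_bound_small_oscillation_vector {q m : ℕ}
    (ζ : Measure (EuclideanSpace ℝ (Fin q))) [IsProbabilityMeasure ζ]
    (hc : IsCompact (msupport ζ))
    (μ : ℝ) (hμ : 0 < μ)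
    (f : EuclideanSpace ℝ (Fin q) → ℝ) (hf : Continuous f)
    (hosc : sSup (f '' msupport ζ) - sInf (f '' msupport ζ) ≤ μ / 2)
    (g : EuclideanSpace ℝ (Fin q) → EuclideanSpace ℝ (Fin m)) (hg : Continuous g)
    (l : ℝ) (hgl : ∀ z ∈ msupport ζ, ‖g z‖ ≤ l) :
    ∫ z, Real.exp (2 * f z / μ) * ‖g z‖ ^ 2 ∂ζ
      ≤ 3 * l ^ 2 * (∫ z, Real.exp (f z / μ) ∂ζ) ^ 2 := by

  set S := msupport ζ with hSdef
  have hnull : ζ Sᶜ = 0 := msupport_compl_null ζ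
  have hSm : MeasurableSet S := (msupport_closed ζ).measurableSet
  have hS1 : ζ S = 1 := (prob_compl_eq_zero_iff hSm).mp hnull
  have hrestrict : ζ.restrict S = ζ :=
    Measure.restrict_eq_self_of_ae_mem (by
      rw [Filter.eventually_iff, mem_ae_iff]
      simpa using hnull)
  -- S nonempty
  have hSne : S.Nonempty := by
    rcases S.eq_empty_or_nonempty with h | h
    · exfalso; rw [h] at hS1; simp at hS1
    · exact h
  have himg : IsCompact (f '' S) := hc.image hf
  have himgne : (f '' S).Nonempty := hSne.image f
  set M := sSup (f '' S) with hM
  set m0 := sInf (f '' S) with hm0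
  have hfM : ∀ z ∈ S, f z ≤ M := fun z hz => le_csSup himg.bddAbove ⟨z, hz, rfl⟩
  have hfm : ∀ z ∈ S, m0 ≤ f z := fun z hz => csInf_le himg.bddBelow ⟨z, hz, rfl⟩
  have hmM : m0 ≤ M := by
    obtain ⟨z, hz⟩ := hSne
    exact le_trans (hfm z hz) (hfM z hz)
  have hl0 : 0 ≤ l := by
    obtain ⟨z, hz⟩ := hSne
    exact le_trans (norm_nonneg _) (hgl z hz)
  -- integrability
  have hint1 : IntegrableOn (fun z => Real.exp (2 * f z / μ) * ‖g z‖ ^ 2) S ζ :=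
    (Continuous.continuousOn (by continuity)).integrableOn_compact hc
  have hint2 : IntegrableOn (fun z => Real.exp (f z / μ)) S ζ :=
    (Continuous.continuousOn (by continuity)).integrableOn_compact hc
  -- LHS bound
  have hLHS : ∫ z, Real.exp (2 * f z / μ) * ‖g z‖ ^ 2 ∂ζ ≤ Real.exp (2 * M / μ) * l ^ 2 := by
    rw [← hrestrict]
    calc ∫ z in S, Real.exp (2 * f z / μ) * ‖g z‖ ^ 2 ∂ζ
        ≤ ∫ _z in S, Real.exp (2 * M / μ) * l ^ 2 ∂ζ := by
          apply setIntegral_mono_on hint1 ((integrableOn_const_iff).mpr (Or.inr (by rw [hS1]; simp))) hSm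
          intro z hz
          apply mul_le_mul
          · exact Real.exp_le_exp.mpr (div_le_div_of_nonneg_right (by linarith [hfM z hz]) hμ.le)
          · exact pow_le_pow_left₀ (norm_nonneg _) (hgl z hz) 2
          · positivity
          · positivity
    _ = Real.exp (2 * M / μ) * l ^ 2 := by
          rw [setIntegral_const, measureReal_def, hS1]; simp
  -- RHS lower bound
  have hRHS : Real.exp (m0 / μ) ≤ ∫ z, Real.exp (f z / μ) ∂ζ := by
    rw [← hrestrict]
    calc Real.exp (m0 / μ) = ∫ _z in S, Real.exp (m0 / μ) ∂ζ := by
          rw [setIntegral_const, measureReal_def, hS1]; simp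
    _ ≤ ∫ z in S, Real.exp (f z / μ) ∂ζ := by
          apply setIntegral_mono_on ((integrableOn_const_iff).mpr (Or.inr (by rw [hS1]; simp))) hint2 hSm
          intro z hz
          exact Real.exp_le_exp.mpr (div_le_div_of_nonneg_right (hfm z hz) hμ.le)
  have hexp : Real.exp (2 * M / μ) ≤ 3 * Real.exp (m0 / μ) ^ 2 := by
    have h1 : 2 * M / μ ≤ 2 * m0 / μ + 1 := by
      rw [div_add' _ _ _ hμ.ne', div_le_div_iff_of_pos_right hμ]
      linarith [hosc]
    calc Real.exp (2 * M / μ) ≤ Real.exp (2 * m0 / μ + 1) := Real.exp_le_exp.mpr h1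
    _ = Real.exp 1 * Real.exp (m0 / μ) ^ 2 := by
        rw [← Real.exp_nat_mul _ 2, ← Real.exp_add]
        ring_nf
    _ ≤ 3 * Real.exp (m0 / μ) ^ 2 := by
        have := Real.exp_one_lt_d9
        nlinarith [sq_nonneg (Real.exp (m0 / μ))]
  calc ∫ z, Real.exp (2 * f z / μ) * ‖g z‖ ^ 2 ∂ζ ≤ Real.exp (2 * M / μ) * l ^ 2 := hLHS
  _ ≤ 3 * Real.exp (m0 / μ) ^ 2 * l ^ 2 := by nlinarith [sq_nonneg l]
  _ ≤ 3 * l ^ 2 * (∫ z, Real.exp (f z / μ) ∂ζ) ^ 2 := by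
      have h2 : Real.exp (m0 / μ) ^ 2 ≤ (∫ z, Real.exp (f z / μ) ∂ζ) ^ 2 :=
        pow_le_pow_left₀ (Real.exp_pos _).le hRHS 2
      nlinarith [sq_nonneg l]
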